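/- The function H(r, Y) = (Yᵀ T_1(r) Y)/σ_2(r) is convex on Γ₂⁺ × ℝⁿ, where Γ₂⁺ is the cone of symmetric n×n matrices with σ_1 > 0 and σ_2 > 0 and T_1(r) = tr(r)I - r. -/

import Mathlib

open Matrix

section Helpers

/-- Cauchy–Schwarz for a quadratic/bilinear form given by a symmetric matrix,
    in the crude Frobenius form. -/
lemma sq_sum_le {n : ℕ} (x : Matrix (Fin n) (Fin n) ℝ) (hx : x.IsSymm) (v w : Fin n → ℝ) :
    (v ⬝ᵥ x *ᵥ w)^2 ≤ (x*x).trace * ((v⬝ᵥv) * (w⬝ᵥw)) := by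
  have h1 : v ⬝ᵥ x *ᵥ w = ∑ p : Fin n × Fin n, x p.1 p.2 * (v p.1 * w p.2) := by
    rw [Fintype.sum_prod_type]
    simp [dotProduct, Matrix.mulVec, dotProduct, Finset.mul_sum, mul_comm, mul_left_comm]
  have h2 : (x*x).trace = ∑ p : Fin n × Fin n, (x p.1 p.2)^2 := by
    rw [Fintype.sum_prod_type]
    simp only [Matrix.trace, Matrix.mul_apply, Matrix.diag]
    congr 1; ext i; congr 1; ext j
    rw [hx.apply i j]; ring
  have h3 : (v⬝ᵥv) * (w⬝ᵥw) = ∑ p : Fin n × Fin n, (v p.1 * w p.2)^2 := by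
    rw [Fintype.sum_prod_type]
    rw [dotProduct, dotProduct, Finset.sum_mul_sum]
    congr 1; ext i; congr 1; ext j; ring
  rw [h1, h2, h3]
  exact Finset.sum_mul_sq_le_sq_mul_sq _ _ _

lemma dot_self_nonneg' {n : ℕ} (v : Fin n → ℝ) : 0 ≤ v ⬝ᵥ v :=
  Finset.sum_nonneg fun i _ => mul_self_nonneg _

lemma dot_self_pos {n : ℕ} {v : Fin n → ℝ} (hv : v ≠ 0) : 0 < v ⬝ᵥ v := by
  obtain ⟨i, hi⟩ := Function.ne_iff.mp hv
  apply Finset.sum_pos' (fun j _ => mul_self_nonneg _)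
  exact ⟨i, Finset.mem_univ i, mul_self_pos.mpr (by simpa using hi)⟩

lemma trace_mul_expand {n : ℕ} (x x' : Matrix (Fin n) (Fin n) ℝ) (hx' : x'.IsSymm) :
    (x*x').trace = ∑ q : Fin n × Fin n, x q.1 q.2 * x' q.1 q.2 := by
  rw [Fintype.sum_prod_type]
  simp only [Matrix.trace, Matrix.mul_apply, Matrix.diag]
  congr 1; ext i; congr 1; ext j
  rw [hx'.apply i j]

lemma trace_sq_nonneg {n : ℕ} (x : Matrix (Fin n) (Fin n) ℝ) (hx : x.IsSymm) :
    0 ≤ (x*x).trace := by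
  rw [trace_mul_expand x x hx]
  exact Finset.sum_nonneg fun q _ => mul_self_nonneg _

lemma trace_CS {n : ℕ} (x x' : Matrix (Fin n) (Fin n) ℝ) (hx : x.IsSymm) (hx' : x'.IsSymm) :
    ((x*x').trace)^2 ≤ (x*x).trace * (x'*x').trace := by
  rw [trace_mul_expand x x' hx', trace_mul_expand x x hx, trace_mul_expand x' x' hx']
  have h2 : ∑ q : Fin n × Fin n, x q.1 q.2 * x q.1 q.2
      = ∑ q : Fin n × Fin n, (x q.1 q.2)^2 := by congr 1; ext q; ring
  have h3 : ∑ q : Fin n × Fin n, x' q.1 q.2 * x' q.1 q.2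
      = ∑ q : Fin n × Fin n, (x' q.1 q.2)^2 := by congr 1; ext q; ring
  rw [h2, h3]
  exact Finset.sum_mul_sq_le_sq_mul_sq _ _ _

lemma symm_T1 {n : ℕ} {x : Matrix (Fin n) (Fin n) ℝ} (hx : x.IsSymm) :
    (x.trace • (1 : Matrix (Fin n) (Fin n) ℝ) - x).IsSymm := by
  unfold Matrix.IsSymm
  rw [Matrix.transpose_sub, Matrix.transpose_smul, Matrix.transpose_one, hx]

lemma isHermitian_of_isSymm {n : ℕ} {x : Matrix (Fin n) (Fin n) ℝ} (hx : x.IsSymm) :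
    x.IsHermitian := by
  rw [Matrix.IsHermitian, conjTranspose_eq_transpose_of_trivial]; exact hx

lemma dot_T1_expand {n : ℕ} (x : Matrix (Fin n) (Fin n) ℝ) (v w : Fin n → ℝ) :
    v ⬝ᵥ (x.trace • (1 : Matrix (Fin n) (Fin n) ℝ) - x) *ᵥ w
      = x.trace * (v ⬝ᵥ w) - v ⬝ᵥ x *ᵥ w := by
  rw [Matrix.sub_mulVec, dotProduct_sub, Matrix.smul_mulVec, Matrix.one_mulVec,
    dotProduct_smul]
  simp [smul_eq_mul]

lemma posDef_T1 {n : ℕ} {x : Matrix (Fin n) (Fin n) ℝ} (hx : x.IsSymm)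
    (ht : 0 < x.trace) (hp : 0 < (x.trace ^ 2 - (x*x).trace) / 2) :
    (x.trace • (1 : Matrix (Fin n) (Fin n) ℝ) - x).PosDef := by
  refine Matrix.PosDef.of_dotProduct_mulVec_pos (isHermitian_of_isSymm (symm_T1 hx)) fun v hv => ?_
  rw [star_trivial, dot_T1_expand]
  have h1 := sq_sum_le x hx v v
  have h2 := dot_self_pos hv
  have hq : (x*x).trace < x.trace^2 := by linarith
  have h3 : (x*x).trace * (v⬝ᵥv * (v⬝ᵥv)) < x.trace^2 * (v⬝ᵥv * (v⬝ᵥv)) :=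
    mul_lt_mul_of_pos_right hq (mul_pos h2 h2)
  nlinarith [mul_pos ht h2]

lemma pencil {n : ℕ} {y : Matrix (Fin n) (Fin n) ℝ} (hy : y.IsSymm) {u : Fin n → ℝ}
    (hu : u ≠ 0) (h : y *ᵥ u = y.trace • u) : y.trace ^ 2 ≤ (y*y).trace := by
  have h1 : u ⬝ᵥ y *ᵥ u = y.trace * (u ⬝ᵥ u) := by
    rw [h, dotProduct_smul, smul_eq_mul]
  have h2 := sq_sum_le y hy u u
  have h3 := dot_self_pos hu
  rw [h1] at h2
  have h4 : (y.trace)^2 * ((u⬝ᵥu)*(u⬝ᵥu)) ≤ (y*y).trace * ((u⬝ᵥu)*(u⬝ᵥu)) := by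
    nlinarith
  exact le_of_mul_le_mul_right h4 (by positivity)

lemma dot_mv_symm {n : ℕ} {M : Matrix (Fin n) (Fin n) ℝ} (hM : Mᵀ = M) (v w : Fin n → ℝ) :
    (M *ᵥ v) ⬝ᵥ w = v ⬝ᵥ (M *ᵥ w) := by
  rw [dotProduct_comm, Matrix.dotProduct_mulVec, ← Matrix.mulVec_transpose, hM,
    dotProduct_comm]

end Helpers

open scoped MatrixOrder in
lemma master_psd {n : ℕ} {x x' : Matrix (Fin n) (Fin n) ℝ} (hx : x.IsSymm) (hx' : x'.IsSymm)
    (ht : 0 < x.trace) (hp : 0 < (x.trace ^ 2 - (x*x).trace) / 2)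
    (ht' : 0 < x'.trace) (hp' : 0 < (x'.trace ^ 2 - (x'*x').trace) / 2)
    {A A' : Matrix (Fin n) (Fin n) ℝ} {p p' b : ℝ}
    (hA : A = x.trace • (1 : Matrix (Fin n) (Fin n) ℝ) - x)
    (hA' : A' = x'.trace • (1 : Matrix (Fin n) (Fin n) ℝ) - x')
    (hpd : p = (x.trace ^ 2 - (x*x).trace) / 2)
    (hpd' : p' = (x'.trace ^ 2 - (x'*x').trace) / 2)
    (hb : b = (x.trace * x'.trace - (x*x').trace) / 2) :
    ((2*b) • A - p • A' - p' • (A * A'⁻¹ * A)).PosSemidef := by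
  have hApd : A.PosDef := hA ▸ posDef_T1 hx ht hp
  have hA'pd : A'.PosDef := hA' ▸ posDef_T1 hx' ht' hp'
  set S := CFC.sqrt A' with hSdef
  have hSS : S * S = A' := CFC.sqrt_mul_sqrt_self A' hA'pd.posSemidef.nonneg
  have hSH : S.IsHermitian := (CFC.sqrt_nonneg A').posSemidef.1
  have hdetS : IsUnit S.det := by
    have h1 : 0 < A'.det := hA'pd.det_pos
    rw [← hSS, Matrix.det_mul] at h1
    have : S.det ≠ 0 := fun h => by rw [h] at h1; simp at h1
    exact this.isUnit
  have hSi : S * S⁻¹ = 1 := Matrix.mul_nonsing_inv S hdetS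
  have hiS : S⁻¹ * S = 1 := Matrix.nonsing_inv_mul S hdetS
  have hiSH : S⁻¹.IsHermitian := by
    rw [Matrix.IsHermitian, Matrix.conjTranspose_nonsing_inv, hSH.eq]
  have hA'i : S⁻¹ * S⁻¹ = A'⁻¹ := by rw [← hSS, Matrix.mul_inv_rev]
  set C := S⁻¹ * A * S⁻¹ with hCdef
  have hCH : C.IsHermitian := by
    rw [Matrix.IsHermitian, hCdef, Matrix.conjTranspose_mul, Matrix.conjTranspose_mul,
      hiSH.eq, hApd.1.eq, Matrix.mul_assoc]
  -- eigenvalue bounds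
  have heig : ∀ i : Fin n, 0 ≤ 2*b*(hCH.eigenvalues i) - p - p'*(hCH.eigenvalues i)^2 := by
    intro i
    set ω := hCH.eigenvalues i with hω
    set v : Fin n → ℝ := ⇑(hCH.eigenvectorBasis i) with hv
    have hvC : C *ᵥ v = ω • v := hCH.mulVec_eigenvectorBasis i
    have hvne : v ≠ 0 := by
      have h := hCH.eigenvectorBasis.orthonormal.ne_zero i
      intro hcon; exact h (by ext j; exact congrFun hcon j)
    set u : Fin n → ℝ := S⁻¹ *ᵥ v with hu
    have hune : u ≠ 0 := by
      intro hcon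
      apply hvne
      have : S *ᵥ u = v := by
        rw [hu, Matrix.mulVec_mulVec, hSi, Matrix.one_mulVec]
      rw [hcon, Matrix.mulVec_zero] at this
      exact this.symm
    have hAu : A *ᵥ u = ω • (A' *ᵥ u) := by
      have h1 : (S * C) *ᵥ v = ω • (S *ᵥ v) := by
        rw [← Matrix.mulVec_mulVec, hvC, Matrix.mulVec_smul]
      have h2 : S * C = A * S⁻¹ := by
        rw [hCdef, ← Matrix.mul_assoc, ← Matrix.mul_assoc, hSi, Matrix.one_mul]
      have h3 : A' *ᵥ u = S *ᵥ v := by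
        rw [hu, Matrix.mulVec_mulVec, ← hSS, Matrix.mul_assoc, hSi, Matrix.mul_one]
      rw [h3, ← h1, h2, ← Matrix.mulVec_mulVec]
    -- apply pencil to y = x - ω • x'
    set y := x - ω • x' with hy
    have hysymm : y.IsSymm := by
      rw [Matrix.IsSymm, hy, Matrix.transpose_sub, Matrix.transpose_smul, hx, hx']
    have hyt : y.trace = x.trace - ω * x'.trace := by
      rw [hy, Matrix.trace_sub, Matrix.trace_smul, smul_eq_mul]
    have hyT1 : y.trace • (1 : Matrix (Fin n) (Fin n) ℝ) - y = A - ω • A' := by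
      rw [hyt, hy, hA, hA']
      module
    have hyu : y *ᵥ u = y.trace • u := by
      have h0 : (y.trace • (1 : Matrix (Fin n) (Fin n) ℝ) - y) *ᵥ u = 0 := by
        rw [hyT1, Matrix.sub_mulVec, hAu, Matrix.smul_mulVec, sub_self]
      have h1 := congrArg (fun w => w + y *ᵥ u) h0
      simp only [Matrix.sub_mulVec, sub_add_cancel, zero_add] at h1
      rw [← h1, Matrix.smul_mulVec, Matrix.one_mulVec]
    have hpen := pencil hysymm hune hyu
    have hyy : (y*y).trace = (x*x).trace - 2*ω*(x*x').trace + ω^2*(x'*x').trace := by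
      rw [hy]
      simp only [Matrix.sub_mul, Matrix.mul_sub, Matrix.smul_mul, Matrix.mul_smul,
        Matrix.trace_sub, Matrix.trace_smul, smul_eq_mul, smul_smul,
        Matrix.trace_mul_comm x' x]
      ring
    rw [hyt, hyy] at hpen
    rw [hpd, hpd', hb]
    nlinarith [hpen]
  -- spectral decomposition
  set U : Matrix (Fin n) (Fin n) ℝ := (hCH.eigenvectorUnitary : Matrix (Fin n) (Fin n) ℝ) with hUdef
  have hUU' : star U * U = 1 := (Matrix.mem_unitaryGroup_iff').mp (hCH.eigenvectorUnitary).2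
  have hUU : U * star U = 1 := (Matrix.mem_unitaryGroup_iff).mp (hCH.eigenvectorUnitary).2
  set D : Matrix (Fin n) (Fin n) ℝ := diagonal hCH.eigenvalues with hDdef
  have hdiag : C = U * D * star U := by
    simpa [RCLike.ofReal_real_eq_id] using hCH.spectral_theorem
  set g : Fin n → ℝ := fun i => 2*b*(hCH.eigenvalues i) - p - p'*(hCH.eigenvalues i)^2 with hgdef
  have hCC : C * C = U * (D * D) * star U := by
    rw [hdiag]
    calc (U*D*star U) * (U*D*star U)
        = U*(D*((star U * U)*(D*star U))) := by simp only [Matrix.mul_assoc]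
      _ = U*(D*D)*star U := by rw [hUU', Matrix.one_mul]; simp only [Matrix.mul_assoc]
  have hone : (1 : Matrix (Fin n) (Fin n) ℝ) = U * 1 * star U := by
    rw [Matrix.mul_one, hUU]
  have hmid : (2*b) • D - p • (1 : Matrix (Fin n) (Fin n) ℝ) - p' • (D * D) = diagonal g := by
    rw [hDdef, Matrix.diagonal_mul_diagonal]
    ext i j
    rcases eq_or_ne i j with rfl | hij
    · simp only [Matrix.sub_apply, Matrix.smul_apply, Matrix.diagonal_apply_eq,
        Matrix.one_apply_eq, smul_eq_mul]
      ring
    · simp only [Matrix.sub_apply, Matrix.smul_apply, Matrix.diagonal_apply_ne _ hij,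
        Matrix.one_apply_ne hij, smul_eq_mul, mul_zero, sub_zero, sub_self]
  have hMeq : (2*b) • C - p • (1 : Matrix (Fin n) (Fin n) ℝ) - p' • (C * C)
      = U * diagonal g * star U := by
    rw [hCC, hdiag, hone, ← hmid]
    simp only [Matrix.mul_sub, Matrix.sub_mul, Matrix.mul_smul, Matrix.smul_mul]
  have hM : ((2*b) • C - p • (1 : Matrix (Fin n) (Fin n) ℝ) - p' • (C * C)).PosSemidef := by
    rw [hMeq, show star U = Uᴴ from rfl]
    exact (Matrix.posSemidef_diagonal_iff.mpr heig).mul_mul_conjTranspose_same U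
  have hpsd := hM.mul_mul_conjTranspose_same S
  rw [hSH.eq] at hpsd
  have hN1 : S * C * S = A := by
    rw [hCdef]
    simp only [← Matrix.mul_assoc]
    rw [hSi, Matrix.one_mul, Matrix.mul_assoc, hiS, Matrix.mul_one]
  have hN3 : S * (C * C) * S = A * A'⁻¹ * A := by
    rw [hCdef]
    simp only [← Matrix.mul_assoc]
    rw [hSi, Matrix.one_mul, Matrix.mul_assoc A S⁻¹ S⁻¹, hA'i,
      Matrix.mul_assoc (A * A'⁻¹ * A) S⁻¹ S, hiS, Matrix.mul_one]
  have hNeq : S * ((2*b) • C - p • (1 : Matrix (Fin n) (Fin n) ℝ) - p' • (C*C)) * S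
      = (2*b) • A - p • A' - p' • (A * A'⁻¹ * A) := by
    simp only [Matrix.mul_sub, Matrix.sub_mul, Matrix.mul_smul, Matrix.smul_mul]
    rw [hN1, hN3, Matrix.mul_one, hSS]
  rwa [hNeq] at hpsd

open scoped MatrixOrder in
lemma KA_nonneg {n : ℕ} {x x' : Matrix (Fin n) (Fin n) ℝ} (hx : x.IsSymm) (hx' : x'.IsSymm)
    (ht : 0 < x.trace) (hp : 0 < (x.trace ^ 2 - (x*x).trace) / 2)
    (ht' : 0 < x'.trace) (hp' : 0 < (x'.trace ^ 2 - (x'*x').trace) / 2)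
    {A A' : Matrix (Fin n) (Fin n) ℝ} {p p' b : ℝ}
    (hA : A = x.trace • (1 : Matrix (Fin n) (Fin n) ℝ) - x)
    (hA' : A' = x'.trace • (1 : Matrix (Fin n) (Fin n) ℝ) - x')
    (hpd : p = (x.trace ^ 2 - (x*x).trace) / 2)
    (hpd' : p' = (x'.trace ^ 2 - (x'*x').trace) / 2)
    (hb : b = (x.trace * x'.trace - (x*x').trace) / 2)
    (Y Y' : Fin n → ℝ) :
    0 ≤ 2*b*(Y ⬝ᵥ A *ᵥ Y)*p' - 2*(Y ⬝ᵥ A *ᵥ Y')*p*p' - (Y ⬝ᵥ A' *ᵥ Y)*p*p'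
        + p^2*(Y' ⬝ᵥ A' *ᵥ Y') := by
  have hppos : 0 < p := hpd ▸ hp
  have hp'pos : 0 < p' := hpd' ▸ hp'
  have hApd : A.PosDef := hA ▸ posDef_T1 hx ht hp
  have hA'pd : A'.PosDef := hA' ▸ posDef_T1 hx' ht' hp'
  have hAsymm : Aᵀ = A := hA ▸ symm_T1 hx
  set S := CFC.sqrt A' with hSdef
  have hSS : S * S = A' := CFC.sqrt_mul_sqrt_self A' hA'pd.posSemidef.nonneg
  have hSH : Sᵀ = S := by
    have := (CFC.sqrt_nonneg A').posSemidef.1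
    rwa [Matrix.IsHermitian, conjTranspose_eq_transpose_of_trivial] at this
  have hdetS : IsUnit S.det := by
    have h1 : 0 < A'.det := hA'pd.det_pos
    rw [← hSS, Matrix.det_mul] at h1
    have hne : S.det ≠ 0 := fun h => by rw [h] at h1; simp at h1
    exact hne.isUnit
  have hSi : S * S⁻¹ = 1 := Matrix.mul_nonsing_inv S hdetS
  have hiS : S⁻¹ * S = 1 := Matrix.nonsing_inv_mul S hdetS
  have hiSH : S⁻¹ᵀ = S⁻¹ := by rw [Matrix.transpose_nonsing_inv, hSH]
  have hA'i : S⁻¹ * S⁻¹ = A'⁻¹ := by rw [← hSS, Matrix.mul_inv_rev]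
  -- quantities
  set z : Fin n → ℝ := A *ᵥ Y with hz
  set J : ℝ := z ⬝ᵥ (A'⁻¹ *ᵥ z) with hJ
  set c : ℝ := Real.sqrt (p'/p) with hc
  set d : ℝ := Real.sqrt (p/p') with hd
  have hc2 : c*c = p'/p := Real.mul_self_sqrt (by positivity)
  have hd2 : d*d = p/p' := Real.mul_self_sqrt (by positivity)
  have hcd : c*d = 1 := by
    rw [hc, hd, ← Real.sqrt_mul (by positivity)]
    rw [show p'/p*(p/p') = 1 by field_simp]
    exact Real.sqrt_one
  set v : Fin n → ℝ := c • (S⁻¹ *ᵥ z) - d • (S *ᵥ Y') with hv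
  -- N psd gives:
  have hN := master_psd hx hx' ht hp ht' hp' hA hA' hpd hpd' hb
  have h0 : 0 ≤ Y ⬝ᵥ (((2*b) • A - p • A' - p' • (A * A'⁻¹ * A)) *ᵥ Y) := by
    simpa [star_trivial] using hN.dotProduct_mulVec_nonneg Y
  have hNex : Y ⬝ᵥ (((2*b) • A - p • A' - p' • (A * A'⁻¹ * A)) *ᵥ Y)
      = 2*b*(Y ⬝ᵥ A *ᵥ Y) - p*(Y ⬝ᵥ A' *ᵥ Y) - p'*J := by
    rw [Matrix.sub_mulVec, Matrix.sub_mulVec, dotProduct_sub, dotProduct_sub,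
      Matrix.smul_mulVec, Matrix.smul_mulVec, Matrix.smul_mulVec,
      dotProduct_smul, dotProduct_smul, dotProduct_smul]
    have : Y ⬝ᵥ ((A * A'⁻¹ * A) *ᵥ Y) = J := by
      rw [hJ, hz, ← Matrix.mulVec_mulVec, ← Matrix.mulVec_mulVec, ← dot_mv_symm hAsymm]
    rw [this]
    simp [smul_eq_mul]
  -- expansion of v ⬝ᵥ v
  have hJ1 : (S⁻¹ *ᵥ z) ⬝ᵥ (S⁻¹ *ᵥ z) = J := by
    rw [dot_mv_symm hiSH, Matrix.mulVec_mulVec, hA'i, hJ]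
  have hcross : (S⁻¹ *ᵥ z) ⬝ᵥ (S *ᵥ Y') = Y ⬝ᵥ (A *ᵥ Y') := by
    rw [dot_mv_symm hiSH, Matrix.mulVec_mulVec, hiS, Matrix.one_mulVec, hz,
      dot_mv_symm hAsymm]
  have hrm' : (S *ᵥ Y') ⬝ᵥ (S *ᵥ Y') = Y' ⬝ᵥ (A' *ᵥ Y') := by
    rw [dot_mv_symm hSH, Matrix.mulVec_mulVec, hSS]
  have hvv : v ⬝ᵥ v = (p'/p)*J + (p/p')*(Y' ⬝ᵥ (A' *ᵥ Y')) - 2*(Y ⬝ᵥ (A *ᵥ Y')) := by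
    rw [hv]
    have h2 : (S *ᵥ Y') ⬝ᵥ (S⁻¹ *ᵥ z) = Y ⬝ᵥ (A *ᵥ Y') := by rw [dotProduct_comm, hcross]
    simp only [dotProduct_sub, sub_dotProduct, dotProduct_smul, smul_dotProduct, smul_eq_mul]
    rw [hJ1, hcross, hrm', h2, ← hc2, ← hd2]
    linear_combination (-(2 * (Y ⬝ᵥ A *ᵥ Y'))) * hcd
  have hvpos : 0 ≤ v ⬝ᵥ v := Finset.sum_nonneg fun i _ => mul_self_nonneg _
  -- combine
  have comb : 2*b*(Y ⬝ᵥ A *ᵥ Y)*p' - 2*(Y ⬝ᵥ A *ᵥ Y')*p*p' - (Y ⬝ᵥ A' *ᵥ Y)*p*p'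
        + p^2*(Y' ⬝ᵥ A' *ᵥ Y')
      = p' * (2*b*(Y ⬝ᵥ A *ᵥ Y) - p*(Y ⬝ᵥ A' *ᵥ Y) - p'*J) + p*p'*(v ⬝ᵥ v) := by
    rw [hvv]; field_simp; ring
  rw [comb, ← hNex]
  have := mul_nonneg hp'pos.le h0
  nlinarith [mul_nonneg (mul_nonneg hppos.le hp'pos.le) hvpos]


set_option maxHeartbeats 2000000 in
/-- convexity of `H(r, Y) = (Yᵀ T₁(r) Y)/σ₂(r)` on `Γ₂⁺ × ℝⁿ`. -/
theorem H_convex (n : ℕ) (r r' : Matrix (Fin n) (Fin n) ℝ)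
    (hr : r.IsSymm) (hr' : r'.IsSymm)
    (h1 : 0 < r.trace) (h2 : 0 < (r.trace ^ 2 - (r * r).trace) / 2)
    (h1' : 0 < r'.trace) (h2' : 0 < (r'.trace ^ 2 - (r' * r').trace) / 2)
    (Y Y' : Fin n → ℝ) (s : ℝ) (hs0 : 0 ≤ s) (hs1 : s ≤ 1) :
    ((s • Y + (1 - s) • Y') ⬝ᵥ
        (((s • r + (1 - s) • r').trace • (1 : Matrix (Fin n) (Fin n) ℝ)
          - (s • r + (1 - s) • r')) *ᵥ (s • Y + (1 - s) • Y')))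
      / (((s • r + (1 - s) • r').trace ^ 2
          - ((s • r + (1 - s) • r') * (s • r + (1 - s) • r')).trace) / 2)
    ≤ s * ((Y ⬝ᵥ ((r.trace • (1 : Matrix (Fin n) (Fin n) ℝ) - r) *ᵥ Y))
            / ((r.trace ^ 2 - (r * r).trace) / 2))
      + (1 - s) * ((Y' ⬝ᵥ ((r'.trace • (1 : Matrix (Fin n) (Fin n) ℝ) - r') *ᵥ Y'))
            / ((r'.trace ^ 2 - (r' * r').trace) / 2)) := by
  set β := 1 - s with hβ
  have hβ0 : 0 ≤ β := by simp [hβ]; linarith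
  set A : Matrix (Fin n) (Fin n) ℝ := r.trace • (1 : Matrix (Fin n) (Fin n) ℝ) - r with hAdef
  set A' : Matrix (Fin n) (Fin n) ℝ := r'.trace • (1 : Matrix (Fin n) (Fin n) ℝ) - r' with hA'def
  set p : ℝ := (r.trace ^ 2 - (r * r).trace) / 2 with hpdef
  set p' : ℝ := (r'.trace ^ 2 - (r' * r').trace) / 2 with hp'def
  set b : ℝ := (r.trace * r'.trace - (r*r').trace) / 2 with hbdef
  have hAsymm : Aᵀ = A := symm_T1 hr
  have hA'symm : A'ᵀ = A' := symm_T1 hr'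
  -- atoms
  set qm : ℝ := Y ⬝ᵥ A *ᵥ Y with hqm
  set qc : ℝ := Y ⬝ᵥ A *ᵥ Y' with hqc
  set qm' : ℝ := Y' ⬝ᵥ A *ᵥ Y' with hqm'
  set rm : ℝ := Y ⬝ᵥ A' *ᵥ Y with hrm
  set rc : ℝ := Y ⬝ᵥ A' *ᵥ Y' with hrc
  set rm' : ℝ := Y' ⬝ᵥ A' *ᵥ Y' with hrm'
  -- positivity of b
  have hbpos : 0 < b := by
    have hcs := trace_CS r r' hr hr'
    have hq : 0 ≤ (r*r).trace := trace_sq_nonneg r hr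
    have hq' : 0 ≤ (r'*r').trace := trace_sq_nonneg r' hr'
    have h2a : (r*r).trace < r.trace^2 := by rw [hpdef] at h2; linarith
    have h2a' : (r'*r').trace < r'.trace^2 := by rw [hp'def] at h2'; linarith
    have hqq : (r*r).trace * ((r'*r').trace) < r.trace^2 * r'.trace^2 := by nlinarith
    have htt : 0 < r.trace * r'.trace := mul_pos h1 h1'
    rw [hbdef]
    nlinarith [sq_nonneg (r.trace * r'.trace + (r*r').trace)]
  have hppos : 0 < p := h2
  have hp'pos : 0 < p' := h2'
  -- denominator expansion
  have hDexp : ((s • r + β • r').trace ^ 2 - ((s • r + β • r') * (s • r + β • r')).trace) / 2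
      = s^2*p + 2*s*β*b + β^2*p' := by
    have htr : (s • r + β • r').trace = s * r.trace + β * r'.trace := by
      rw [Matrix.trace_add, Matrix.trace_smul, Matrix.trace_smul]; simp [smul_eq_mul]
    have hmul : ((s • r + β • r') * (s • r + β • r')).trace
        = s^2*(r*r).trace + 2*s*β*(r*r').trace + β^2*(r'*r').trace := by
      rw [Matrix.add_mul, Matrix.mul_add, Matrix.mul_add]
      simp only [Matrix.smul_mul, Matrix.mul_smul, Matrix.trace_add, Matrix.trace_smul,
        smul_eq_mul, smul_smul, Matrix.trace_mul_comm r' r]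
      ring
    rw [htr, hmul, hpdef, hp'def, hbdef]
    ring
  -- numerator expansion
  have hT1s : (s • r + β • r').trace • (1 : Matrix (Fin n) (Fin n) ℝ) - (s • r + β • r')
      = s • A + β • A' := by
    rw [Matrix.trace_add, Matrix.trace_smul, Matrix.trace_smul, hAdef, hA'def]
    simp only [smul_eq_mul]
    module
  have hsymswap : Y' ⬝ᵥ A *ᵥ Y = qc := by
    rw [hqc, ← dot_mv_symm hAsymm, dotProduct_comm]
  have hsymswap' : Y' ⬝ᵥ A' *ᵥ Y = rc := by
    rw [hrc, ← dot_mv_symm hA'symm, dotProduct_comm]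
  have hNumexp : (s • Y + β • Y') ⬝ᵥ ((s • A + β • A') *ᵥ (s • Y + β • Y'))
      = s^3*qm + 2*s^2*β*qc + s*β^2*qm' + s^2*β*rm + 2*s*β^2*rc + β^3*rm' := by
    simp only [Matrix.add_mulVec, Matrix.smul_mulVec, Matrix.mulVec_add,
      Matrix.mulVec_smul, dotProduct_add, add_dotProduct, dotProduct_smul, smul_dotProduct,
      smul_eq_mul]
    rw [hsymswap, hsymswap']
    rw [← hqm, ← hqc, ← hqm', ← hrm, ← hrc, ← hrm']
    ring
  -- key inequalities
  have hKA := KA_nonneg hr hr' h1 h2 h1' h2' hAdef hA'def hpdef hp'def hbdef Y Y'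
  have hb' : b = (r'.trace * r.trace - (r'*r).trace) / 2 := by
    rw [hbdef, Matrix.trace_mul_comm r' r]; ring
  have hKB := KA_nonneg hr' hr h1' h2' h1 h2 hA'def hAdef hp'def hpdef hb' Y' Y
  have hKA2 : 0 ≤ 2*b*qm*p' - 2*qc*p*p' - rm*p*p' + p^2*rm' := by
    rw [hqm, hqc, hrm, hrm']; exact hKA
  rw [hsymswap'] at hKB
  have hKB2 : 0 ≤ 2*b*rm'*p - 2*rc*p'*p - qm'*p'*p + p'^2*qm := by
    rw [hrm', hqm', hqm]; exact hKB
  -- final algebra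
  set D : ℝ := s^2*p + 2*s*β*b + β^2*p' with hDdef
  have hDpos : 0 < D := by
    rcases le_or_gt (1/2 : ℝ) s with h | h
    · have hs2 : (1/4:ℝ) ≤ s^2 := by nlinarith
      have ha : (0:ℝ) < s^2*p :=
        lt_of_lt_of_le (by positivity) (mul_le_mul_of_nonneg_right hs2 hppos.le)
      have hb2 : 0 ≤ 2*s*β*b := by positivity
      have hc2 : 0 ≤ β^2*p' := by positivity
      rw [hDdef]; linarith
    · have hβh : (1/2:ℝ) ≤ β := by rw [hβ]; linarith
      have hs2 : (1/4:ℝ) ≤ β^2 := by nlinarith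
      have ha : (0:ℝ) < β^2*p' :=
        lt_of_lt_of_le (by positivity) (mul_le_mul_of_nonneg_right hs2 hp'pos.le)
      have hb2 : 0 ≤ 2*s*β*b := by positivity
      have hc2 : 0 ≤ s^2*p := by positivity
      rw [hDdef]; linarith
  set Num : ℝ := s^3*qm + 2*s^2*β*qc + s*β^2*qm' + s^2*β*rm + 2*s*β^2*rc + β^3*rm' with hNum
  have hiden : D*(s*qm*p' + β*rm'*p) - Num*(p*p')
      = s*β*(s*(2*b*qm*p' - 2*qc*p*p' - rm*p*p' + p^2*rm')
           + β*(2*b*rm'*p - 2*rc*p'*p - qm'*p'*p + p'^2*qm)) := by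
    rw [hDdef, hNum]; ring
  have hkey : Num*(p*p') ≤ D*(s*qm*p' + β*rm'*p) := by
    nlinarith [mul_nonneg (mul_nonneg hs0 hβ0) (mul_nonneg hs0 hKA2),
      mul_nonneg (mul_nonneg hs0 hβ0) (mul_nonneg hβ0 hKB2)]
  -- convert to the division form
  rw [hT1s, hDexp, hNumexp]
  have hfin : Num / D ≤ (s*qm*p' + β*rm'*p)/(p*p') := by
    rw [div_le_div_iff₀ hDpos (by positivity)]
    linarith [hkey]
  have heq : (s*qm*p' + β*rm'*p)/(p*p') = s * (qm/p) + β * (rm'/p') := by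
    field_simp
  calc Num / D ≤ (s*qm*p' + β*rm'*p)/(p*p') := hfin
    _ = s * (qm/p) + β * (rm'/p') := heq
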